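/- arXiv:2405.16212 — 4 statements merged into one kernel-verified Lean document; each statement's English description precedes it below -/
import Mathlib

section
/- Let D be a subset of the real numbers and f : D → [0,∞) a map such that for every t ∈ D one has 1−t ∈ D and f(t)+f(1−t)=1. Let X be a pre-Hilbert module over a C*-algebra A and φ a positive linear functional on A. If n ≥ 2 and x₁,…,xₙ, z ∈ X satisfy φ(|z|²)=1, then for every ξ ∈ D and every nonzero complex number α: |∏_{i=1}^{n} φ(⟨x_i,z⟩)|² ≤ (max{1,|α−1|²}/|α|²)·∏_{i=1}^{n} φ(|x_i|²) + (f(1−ξ)/|α|²)·|φ(⟨x₁,x₂⟩)·∏_{i=3}^{n} φ(⟨x_i,z⟩)|² + ((f(ξ)+2·max{1,|α−1|})/|α|²)·∏_{i=1}^{n} √(φ(|x_i|²))·|φ(⟨x₁,x₂⟩)·∏_{i=3}^{n} φ(⟨x_i,z⟩)|. -/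
/-!
Write `⟪x, y⟫` for the semi-inner product `φ ⟨x, y⟩` on `X`; it is Hermitian because a positive
functional on a C⋆-algebra is star-preserving. For a unit vector `z` let `u = ⟪z, y⟫ z`. Since
`u ⟂ y - u`, Pythagoras bounds `α u - y = (α - 1) u - (y - u)` by `max 1 |α - 1| ‖y‖`, and
Cauchy–Schwarz against `x` gives `|α ⟪x, z⟫ ⟪z, y⟫ - ⟪x, y⟫| ≤ max 1 |α - 1| ‖x‖ ‖y‖`. Squaring
`|α| |⟪x, z⟫ ⟪z, y⟫| ≤ max 1 |α - 1| ‖x‖ ‖y‖ + |⟪x, y⟫|` and writing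
`|⟪x, y⟫|² = f(ξ) |⟪x, y⟫|² + f(1 - ξ) |⟪x, y⟫|²`, with `|⟪x, y⟫| ≤ ‖x‖ ‖y‖` in the first summand,
gives the case `n = 2`; the remaining factors obey `|⟪xᵢ, z⟫| ≤ ‖xᵢ‖`.
-/

open scoped ComplexOrder RightActions

/-- The December 2024 Mathlib `CStarModule` (right `Aᵐᵒᵖ`-action); Mathlib's class now uses a
left action with different axioms, so the old class is restated here. -/
class CStarModuleOld (A E : Type*) [NonUnitalSemiring A] [StarRing A] [Module ℂ A]
    [AddCommGroup E] [Module ℂ E] [PartialOrder A] [SMul Aᵐᵒᵖ E] [Norm A] [Norm E]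
    extends Inner A E where
  inner_add_right {x} {y} {z} : inner x (y + z) = inner x y + inner x z
  inner_self_nonneg {x} : 0 ≤ inner x x
  inner_self {x} : inner x x = 0 ↔ x = 0
  inner_op_smul_right {a : A} {x y : E} : inner x (y <• a) = inner x y * a
  inner_smul_right_complex {z : ℂ} {x} {y} : inner x (z • y) = z • inner x y
  star_inner x y : star (inner x y) = inner y x
  norm_eq_sqrt_norm_inner_self x : ‖x‖ = √‖inner x x‖

open scoped InnerProductSpace
open Finset

lemma Finset.prod_Icc_one_eq_mul_mul_prod_Icc_three {M : Type*} [CommMonoid M] {n : ℕ}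
    (hn : 2 ≤ n) (g : ℕ → M) :
    ∏ i ∈ Icc 1 n, g i = g 1 * (g 2 * ∏ i ∈ Icc 3 n, g i) := by
  rw [← insert_Icc_succ_left_eq_Icc (by omega : 1 ≤ n), prod_insert (by simp),
    ← insert_Icc_succ_left_eq_Icc (by simpa using hn), prod_insert (by simp)]
  rfl

theorem norm_smul_add_smul_le_of_inner_eq_zero {𝕜 E : Type*} [RCLike 𝕜]
    [SeminormedAddCommGroup E] [InnerProductSpace 𝕜 E] {u w : E} (h : ⟪u, w⟫_𝕜 = 0) (a b : 𝕜) :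
    ‖a • u + b • w‖ ≤ max ‖a‖ ‖b‖ * ‖u + w‖ := by
  have hab : ⟪a • u, b • w⟫_𝕜 = 0 := by simp [inner_smul_left, inner_smul_right, h]
  refine nonneg_le_nonneg_of_sq_le_sq (by positivity) ?_
  rw [norm_add_sq_eq_norm_sq_add_norm_sq_of_inner_eq_zero _ _ hab, mul_mul_mul_comm,
    norm_add_sq_eq_norm_sq_add_norm_sq_of_inner_eq_zero _ _ h, norm_smul, norm_smul]
  have ha : ‖a‖ * ‖a‖ ≤ max ‖a‖ ‖b‖ * max ‖a‖ ‖b‖ := by gcongr <;> exact le_max_left _ _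
  have hb : ‖b‖ * ‖b‖ ≤ max ‖a‖ ‖b‖ * max ‖a‖ ‖b‖ := by gcongr <;> exact le_max_right _ _
  nlinarith [mul_self_nonneg ‖u‖, mul_self_nonneg ‖w‖]

section Buzano

variable {E : Type*} [SeminormedAddCommGroup E] [InnerProductSpace ℂ E] {z : E}

theorem norm_mul_inner_mul_inner_sub_inner_le (hz : ‖z‖ = 1) (α : ℂ) (x y : E) :
    ‖α * ⟪x, z⟫_ℂ * ⟪z, y⟫_ℂ - ⟪x, y⟫_ℂ‖ ≤ max 1 ‖α - 1‖ * (‖x‖ * ‖y‖) := by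
  set u := ⟪z, y⟫_ℂ • z
  have hzz : ⟪z, z⟫_ℂ = 1 := by simp [inner_self_eq_norm_sq_to_K, hz]
  have horth : ⟪u, y - u⟫_ℂ = 0 := by
    rw [inner_smul_left, inner_sub_right, inner_smul_right, hzz, mul_one, sub_self, mul_zero]
  have hv : ‖(α * ⟪z, y⟫_ℂ) • z - y‖ ≤ max 1 ‖α - 1‖ * ‖y‖ := by
    have := norm_smul_add_smul_le_of_inner_eq_zero horth (α - 1) (-1)
    rw [norm_neg, norm_one, max_comm, add_sub_cancel] at this
    convert this using 2
    simp only [u, smul_smul]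
    module
  calc ‖α * ⟪x, z⟫_ℂ * ⟪z, y⟫_ℂ - ⟪x, y⟫_ℂ‖ = ‖⟪x, (α * ⟪z, y⟫_ℂ) • z - y⟫_ℂ‖ := by
        rw [inner_sub_right, inner_smul_right]; ring_nf
    _ ≤ ‖x‖ * ‖(α * ⟪z, y⟫_ℂ) • z - y‖ := norm_inner_le_norm _ _
    _ ≤ ‖x‖ * (max 1 ‖α - 1‖ * ‖y‖) := by gcongr
    _ = max 1 ‖α - 1‖ * (‖x‖ * ‖y‖) := by ring

theorem sq_norm_mul_inner_mul_inner_le (hz : ‖z‖ = 1) {s t : ℝ} (hs : 0 ≤ s) (hst : s + t = 1)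
    (α : ℂ) (x y : E) :
    ‖α‖ ^ 2 * (‖⟪x, z⟫_ℂ‖ * ‖⟪y, z⟫_ℂ‖) ^ 2 ≤
      max 1 ‖α - 1‖ ^ 2 * (‖x‖ * ‖y‖) ^ 2 + t * ‖⟪x, y⟫_ℂ‖ ^ 2
        + (s + 2 * max 1 ‖α - 1‖) * (‖x‖ * ‖y‖) * ‖⟪x, y⟫_ℂ‖ := by
  set M := max 1 ‖α - 1‖
  set p := ‖x‖ * ‖y‖
  set β := ‖⟪x, y⟫_ℂ‖
  have hβ : β ≤ p := norm_inner_le_norm x y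
  have hbuzano : ‖α‖ * (‖⟪x, z⟫_ℂ‖ * ‖⟪y, z⟫_ℂ‖) ≤ M * p + β := by
    have := norm_mul_inner_mul_inner_sub_inner_le hz α x y
    rw [← norm_inner_symm z y, ← norm_mul, ← norm_mul, ← mul_assoc]
    linarith [norm_le_norm_sub_add (α * ⟪x, z⟫_ℂ * ⟪z, y⟫_ℂ) ⟪x, y⟫_ℂ]
  have hsβ : s * β ^ 2 ≤ s * (p * β) := by
    rw [sq]
    gcongr
  calc ‖α‖ ^ 2 * (‖⟪x, z⟫_ℂ‖ * ‖⟪y, z⟫_ℂ‖) ^ 2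
      = (‖α‖ * (‖⟪x, z⟫_ℂ‖ * ‖⟪y, z⟫_ℂ‖)) ^ 2 := by ring
    _ ≤ (M * p + β) ^ 2 := by gcongr
    _ = M ^ 2 * p ^ 2 + t * β ^ 2 + 2 * M * p * β + s * β ^ 2 := by
        linear_combination (-β ^ 2) * hst
    _ ≤ M ^ 2 * p ^ 2 + t * β ^ 2 + (s + 2 * M) * p * β := by linarith

theorem sq_norm_prod_inner_le {n : ℕ} (hn : 2 ≤ n) (x : ℕ → E) (hz : ‖z‖ = 1) {s t : ℝ}
    (hs : 0 ≤ s) (hst : s + t = 1) {α : ℂ} (hα : α ≠ 0) :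
    ‖∏ i ∈ Icc 1 n, ⟪x i, z⟫_ℂ‖ ^ 2 ≤
      max 1 (‖α - 1‖ ^ 2) / ‖α‖ ^ 2 * ∏ i ∈ Icc 1 n, ‖x i‖ ^ 2
      + t / ‖α‖ ^ 2 * ‖⟪x 1, x 2⟫_ℂ * ∏ i ∈ Icc 3 n, ⟪x i, z⟫_ℂ‖ ^ 2
      + (s + 2 * max 1 ‖α - 1‖) / ‖α‖ ^ 2 * (∏ i ∈ Icc 1 n, ‖x i‖)
        * ‖⟪x 1, x 2⟫_ℂ * ∏ i ∈ Icc 3 n, ⟪x i, z⟫_ℂ‖ := by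
  rw [prod_Icc_one_eq_mul_mul_prod_Icc_three hn (fun i => ⟪x i, z⟫_ℂ),
    prod_Icc_one_eq_mul_mul_prod_Icc_three hn (fun i => ‖x i‖ ^ 2),
    prod_Icc_one_eq_mul_mul_prod_Icc_three hn (fun i => ‖x i‖), prod_pow, norm_mul, norm_mul,
    norm_mul]
  set M := max 1 ‖α - 1‖
  set p := ‖x 1‖ * ‖x 2‖
  set β := ‖⟪x 1, x 2⟫_ℂ‖
  set q := ‖∏ i ∈ Icc 3 n, ⟪x i, z⟫_ℂ‖
  set r := ∏ i ∈ Icc 3 n, ‖x i‖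
  have hM : max 1 (‖α - 1‖ ^ 2) = M ^ 2 := by
    rw [← one_pow 2, ← pow_left_monotoneOn.map_max (Set.mem_Ici.2 zero_le_one)
      (Set.mem_Ici.2 (norm_nonneg _))]
  have hqr : q ≤ r := by
    simp only [q, r, norm_prod]
    gcongr with i
    simpa [hz] using norm_inner_le_norm (𝕜 := ℂ) (x i) z
  have htwo := sq_norm_mul_inner_mul_inner_le hz hs hst α (x 1) (x 2)
  rw [hM]
  calc (‖⟪x 1, z⟫_ℂ‖ * (‖⟪x 2, z⟫_ℂ‖ * q)) ^ 2
      = ‖α‖ ^ 2 * (‖⟪x 1, z⟫_ℂ‖ * ‖⟪x 2, z⟫_ℂ‖) ^ 2 * q ^ 2 / ‖α‖ ^ 2 := by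
        field_simp
    _ ≤ (M ^ 2 * p ^ 2 + t * β ^ 2 + (s + 2 * M) * p * β) * q ^ 2 / ‖α‖ ^ 2 := by gcongr
    _ ≤ (M ^ 2 * p ^ 2 * r ^ 2 + t * (β * q) ^ 2 + (s + 2 * M) * p * β * q * r) / ‖α‖ ^ 2 := by
        have h1 : M ^ 2 * p ^ 2 * q ^ 2 ≤ M ^ 2 * p ^ 2 * r ^ 2 := by gcongr
        have h2 : (s + 2 * M) * p * β * q * q ≤ (s + 2 * M) * p * β * q * r := by gcongr
        gcongr
        linarith
    _ = _ := by ring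

end Buzano

namespace CStarModuleOld

variable {A X : Type*} [NonUnitalCStarAlgebra A] [PartialOrder A]
    [AddCommGroup X] [Module ℂ X] [SMul Aᵐᵒᵖ X] [Norm X] [CStarModuleOld A X]

lemma inner_add_left {x y z : X} : inner A (x + y) z = inner A x z + inner A y z := by
  rw [← star_inner z, inner_add_right, star_add, star_inner, star_inner]

lemma inner_smul_left_complex {w : ℂ} {x y : X} : inner A (w • x) y = star w • inner A x y := by
  rw [← star_inner y, inner_smul_right_complex, star_smul, star_inner]

set_option linter.unusedVariables false in
variable (X) in
/-- A type synonym for `X` carrying the semi-inner product `f (inner A x y)`, as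
`PositiveLinearMap.PreGNS` does for `A` itself. -/
def PreGNS (f : A →ₚ[ℂ] ℂ) : Type _ := X

variable (f : A →ₚ[ℂ] ℂ)

instance : AddCommGroup (PreGNS X f) := inferInstanceAs (AddCommGroup X)
instance : Module ℂ (PreGNS X f) := inferInstanceAs (Module ℂ X)

def toPreGNS : X ≃ₗ[ℂ] PreGNS X f := LinearEquiv.refl ℂ X

variable [StarOrderedRing A]

noncomputable abbrev preGNSCore : PreInnerProductSpace.Core ℂ (PreGNS X f) where
  inner x y := f (inner A ((toPreGNS f).symm x) ((toPreGNS f).symm y))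
  conj_inner_symm x y := by rw [← star_inner, map_star, Complex.star_def, Complex.conj_conj]
  re_inner_nonneg x := (Complex.nonneg_iff.mp (f.map_nonneg inner_self_nonneg)).1
  add_left x y z := by rw [map_add, inner_add_left, map_add]
  smul_left x y r := by
    rw [map_smul, inner_smul_left_complex, map_smul, smul_eq_mul, Complex.star_def]

noncomputable instance : SeminormedAddCommGroup (PreGNS X f) :=
  InnerProductSpace.Core.toSeminormedAddCommGroup (c := preGNSCore f)

noncomputable instance : InnerProductSpace ℂ (PreGNS X f) :=
  InnerProductSpace.ofCore (preGNSCore f)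

lemma inner_toPreGNS (x y : X) : ⟪toPreGNS f x, toPreGNS f y⟫_ℂ = f (inner A x y) := rfl

lemma norm_toPreGNS (x : X) : ‖toPreGNS f x‖ = √(f (inner A x x)).re := rfl

lemma norm_toPreGNS_sq (x : X) : ‖toPreGNS f x‖ ^ 2 = (f (inner A x x)).re := by
  rw [← inner_self_eq_norm_sq (𝕜 := ℂ), inner_toPreGNS]
  rfl

end CStarModuleOld

theorem buzano_extension_general
    {A X : Type*} [NonUnitalCStarAlgebra A] [PartialOrder A] [StarOrderedRing A]
    [AddCommGroup X] [Module ℂ X] [SMul Aᵐᵒᵖ X] [Norm X] [CStarModuleOld A X]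
    (D : Set ℝ) (f : ℝ → ℝ)
    (hf_nonneg : ∀ t ∈ D, 0 ≤ f t)
    (hf : ∀ t ∈ D, f t + f (1 - t) = 1)
    (φ : A →ₗ[ℂ] ℂ) (hφ : ∀ b : A, 0 ≤ b → 0 ≤ φ b)
    (n : ℕ) (hn : 2 ≤ n) (x : ℕ → X) (z : X)
    (hz : φ (inner A z z) = 1)
    (ξ : ℝ) (hξ : ξ ∈ D) (α : ℂ) (hα : α ≠ 0) :
    ‖∏ i ∈ Finset.Icc 1 n, φ (inner A (x i) z)‖ ^ 2 ≤
      max 1 (‖α - 1‖ ^ 2) / ‖α‖ ^ 2 *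
          ∏ i ∈ Finset.Icc 1 n, (φ (inner A (x i) (x i))).re
      + f (1 - ξ) / ‖α‖ ^ 2 *
          ‖φ (inner A (x 1) (x 2)) *
            ∏ i ∈ Finset.Icc 3 n, φ (inner A (x i) z)‖ ^ 2
      + (f ξ + 2 * max 1 (‖α - 1‖)) / ‖α‖ ^ 2 *
          (∏ i ∈ Finset.Icc 1 n, Real.sqrt (φ (inner A (x i) (x i))).re) *
          ‖φ (inner A (x 1) (x 2)) *
            ∏ i ∈ Finset.Icc 3 n, φ (inner A (x i) z)‖ := by
  set ψ := PositiveLinearMap.mk₀ φ hφ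
  have hz' : ‖CStarModuleOld.toPreGNS ψ z‖ = 1 := by
    rw [CStarModuleOld.norm_toPreGNS, show ψ (inner A z z) = 1 from hz, Complex.one_re,
      Real.sqrt_one]
  have key := sq_norm_prod_inner_le hn (fun i => CStarModuleOld.toPreGNS ψ (x i)) hz'
    (hf_nonneg ξ hξ) (hf ξ hξ) hα
  simp only [CStarModuleOld.inner_toPreGNS, CStarModuleOld.norm_toPreGNS_sq] at key
  exact key

/-- Theorem 2.1: extension of the Buzano inequality in pre-Hilbert
`C*`-modules. -/
theorem buzano_extension
    {A X : Type*} [NonUnitalCStarAlgebra A] [PartialOrder A] [StarOrderedRing A]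
    [AddCommGroup X] [Module ℂ X] [SMul Aᵐᵒᵖ X] [Norm X] [CStarModuleOld A X]
    (D : Set ℝ) (f : ℝ → ℝ)
    (hD : ∀ t ∈ D, (1 - t) ∈ D)
    (hf_nonneg : ∀ t ∈ D, 0 ≤ f t)
    (hf : ∀ t ∈ D, f t + f (1 - t) = 1)
    (φ : A →ₗ[ℂ] ℂ) (hφ : ∀ b : A, 0 ≤ b → 0 ≤ φ b)
    (n : ℕ) (hn : 2 ≤ n) (x : ℕ → X) (z : X)
    (hz : φ (inner A z z) = 1)
    (ξ : ℝ) (hξ : ξ ∈ D) (α : ℂ) (hα : α ≠ 0) :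
    ‖∏ i ∈ Finset.Icc 1 n, φ (inner A (x i) z)‖ ^ 2 ≤
      max 1 (‖α - 1‖ ^ 2) / ‖α‖ ^ 2 *
          ∏ i ∈ Finset.Icc 1 n, (φ (inner A (x i) (x i))).re
      + f (1 - ξ) / ‖α‖ ^ 2 *
          ‖φ (inner A (x 1) (x 2)) *
            ∏ i ∈ Finset.Icc 3 n, φ (inner A (x i) z)‖ ^ 2
      + (f ξ + 2 * max 1 (‖α - 1‖)) / ‖α‖ ^ 2 *
          (∏ i ∈ Finset.Icc 1 n, Real.sqrt (φ (inner A (x i) (x i))).re) *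
          ‖φ (inner A (x 1) (x 2)) *
            ∏ i ∈ Finset.Icc 3 n, φ (inner A (x i) z)‖ :=
  buzano_extension_general D f hf_nonneg hf φ hφ n hn x z hz ξ hξ α hα
end

section
/- Let H be a complex inner product space with inner product [·,·]. If n ≥ 2 and x₁,…,xₙ, z ∈ H satisfy ‖z‖ = 1, then |∏_{i=1}^{n} [x_i,z]| ≤ (1/2)·( ∏_{i=1}^{n} ‖x_i‖ + |[x₁,x₂]·∏_{i=3}^{n} [x_i,z]| ). -/
/-!
Reflecting `y` in the line through the unit vector `z` gives `y' = 2⟪z, y⟫ z - y` with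
`‖y'‖ = ‖y‖`, so `2⟪x, z⟫⟪z, y⟫ = ⟪x, y'⟫ + ⟪x, y⟫` and Cauchy–Schwarz yields Buzano's inequality
`‖⟪x, z⟫⟪z, y⟫‖ ≤ (‖x‖‖y‖ + ‖⟪x, y⟫‖) / 2`. Apply it to `x₁, x₂` and bound the remaining
factors `‖⟪xᵢ, z⟫‖ ≤ ‖xᵢ‖` by Cauchy–Schwarz.
-/

open Finset

lemma Finset.prod_Icc_eq_mul_mul_prod_Icc {M : Type*} [CommMonoid M] {a n : ℕ} (h : a + 1 ≤ n)
    (f : ℕ → M) : ∏ i ∈ Icc a n, f i = f a * f (a + 1) * ∏ i ∈ Icc (a + 2) n, f i := by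
  rw [← insert_Icc_add_one_left_eq_Icc (by omega : a ≤ n),
    ← insert_Icc_add_one_left_eq_Icc h, prod_insert (by simp), prod_insert (by simp), mul_assoc]
  rfl

section Buzano

variable {𝕜 E : Type*} [RCLike 𝕜] [NormedAddCommGroup E] [InnerProductSpace 𝕜 E]

local notation "⟪" x ", " y "⟫" => inner 𝕜 x y

lemma inner_reflection_span_singleton_of_norm_eq_one {z : E} (hz : ‖z‖ = 1) (x y : E) :
    ⟪x, (𝕜 ∙ z).reflection y⟫ = 2 * ⟪x, z⟫ * ⟪z, y⟫ - ⟪x, y⟫ := by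
  rw [Submodule.reflection_apply, Submodule.starProjection_unit_singleton 𝕜 hz, inner_sub_right,
    two_smul, inner_add_right, inner_smul_right]
  ring

theorem norm_inner_mul_inner_le_of_norm_eq_one {z : E} (hz : ‖z‖ = 1) (x y : E) :
    ‖⟪x, z⟫ * ⟪z, y⟫‖ ≤ (‖x‖ * ‖y‖ + ‖⟪x, y⟫‖) / 2 := by
  have h : 2 * (⟪x, z⟫ * ⟪z, y⟫) = ⟪x, (𝕜 ∙ z).reflection y⟫ + ⟪x, y⟫ := by
    rw [inner_reflection_span_singleton_of_norm_eq_one hz]; ring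
  have h2 : ‖2 * (⟪x, z⟫ * ⟪z, y⟫)‖ ≤ ‖x‖ * ‖y‖ + ‖⟪x, y⟫‖ := by
    rw [h]
    calc _ ≤ ‖⟪x, (𝕜 ∙ z).reflection y⟫‖ + ‖⟪x, y⟫‖ := norm_add_le _ _
      _ ≤ ‖x‖ * ‖y‖ + ‖⟪x, y⟫‖ := by
        gcongr
        simpa using norm_inner_le_norm (𝕜 := 𝕜) x ((𝕜 ∙ z).reflection y)
  rw [norm_mul, RCLike.norm_two] at h2
  linarith

theorem norm_prod_inner_le_prod_norm_of_norm_eq_one {ι : Type*} (s : Finset ι) (x : ι → E)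
    {z : E} (hz : ‖z‖ = 1) : ‖∏ i ∈ s, ⟪x i, z⟫‖ ≤ ∏ i ∈ s, ‖x i‖ := by
  rw [norm_prod]
  gcongr with i
  simpa [hz] using norm_inner_le_norm (𝕜 := 𝕜) (x i) z

end Buzano

/-- Remark 2.3: extension of the classical Buzano inequality in a
complex inner product space. -/
theorem buzano_inner_product_space
    {H : Type*} [NormedAddCommGroup H] [InnerProductSpace ℂ H]
    (n : ℕ) (hn : 2 ≤ n) (x : ℕ → H) (z : H) (hz : ‖z‖ = 1) :
    ‖∏ i ∈ Finset.Icc 1 n, (inner ℂ (x i) z : ℂ)‖ ≤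
      (1 / 2) *
        ((∏ i ∈ Finset.Icc 1 n, ‖x i‖)
          + ‖(inner ℂ (x 1) (x 2) : ℂ) *
              ∏ i ∈ Finset.Icc 3 n, (inner ℂ (x i) z : ℂ)‖) := by
  set P := ∏ i ∈ Icc 3 n, (inner ℂ (x i) z : ℂ)
  have hbuzano : ‖inner ℂ (x 1) z‖ * ‖inner ℂ (x 2) z‖ ≤
      (‖x 1‖ * ‖x 2‖ + ‖inner ℂ (x 1) (x 2)‖) / 2 := by
    rw [norm_inner_symm (x 2), ← norm_mul]
    exact norm_inner_mul_inner_le_of_norm_eq_one hz _ _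
  have hP : ‖P‖ ≤ ∏ i ∈ Icc 3 n, ‖x i‖ := norm_prod_inner_le_prod_norm_of_norm_eq_one _ x hz
  rw [prod_Icc_eq_mul_mul_prod_Icc hn, prod_Icc_eq_mul_mul_prod_Icc hn]
  simp only [norm_mul]
  calc _ ≤ (‖x 1‖ * ‖x 2‖ + ‖inner ℂ (x 1) (x 2)‖) / 2 * ‖P‖ := by gcongr
    _ ≤ _ := by
      have := mul_le_mul_of_nonneg_left hP (by positivity : 0 ≤ ‖x 1‖ * ‖x 2‖)
      linarith
end

section
/- Let A be a unital C*-algebra, a ∈ A, φ a state on A, and n an integer with n ≥ 2. Then |φ(a)|ⁿ ≤ Σ_{i=1}^{n−1} (1/2ⁱ)·√(φ((aⁱ)* aⁱ))·(φ(a a*))^{(n−i)/2} + (1/2^{n−1})·|φ(aⁿ)|. -/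
open scoped ComplexOrder

/-- A state on a unital `C*`-algebra: a positive linear functional `φ` (equivalently, since the
algebra is complete, `φ (star b * b) ≥ 0` for all `b`) with `φ 1 = 1`. -/
def IsState {A : Type*} [CStarAlgebra A] (φ : A →ₗ[ℂ] ℂ) : Prop :=
  (∀ b : A, 0 ≤ φ (star b * b)) ∧ φ 1 = 1

/-- The numerical radius of an element of a unital `C*`-algebra:
`v(a) = sup { |φ(a)| : φ a state on A }`. -/
noncomputable def numRadius {A : Type*} [CStarAlgebra A] (a : A) : ℝ :=
  sSup {r : ℝ | ∃ φ : A →ₗ[ℂ] ℂ, IsState φ ∧ r = ‖φ a‖}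

/-!
The state `φ` turns `A` into a semi-inner product space, `⟪x, y⟫ = φ (x⋆ y)` (the GNS space),
in which `1` is a unit vector. Buzano's inequality for the unit vector `1`, applied to `a⋆` and
`aᵐ`, reads `2 |φ a| |φ aᵐ| ≤ √φ(a a⋆) √φ((aᵐ)⋆ aᵐ) + |φ aᵐ⁺¹|`, and Cauchy–Schwarz gives
`|φ a| ≤ √φ(a a⋆)`. Multiplying the inequality for `n` by `|φ a|` and estimating its last term
with Buzano's inequality yields the inequality for `n + 1`.
-/

open scoped InnerProductSpace

section Buzano

variable {𝕜 E : Type*} [RCLike 𝕜] [SeminormedAddCommGroup E] [InnerProductSpace 𝕜 E]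

theorem norm_two_inner_smul_sub_self {e : E} (he : ‖e‖ = 1) (y : E) :
    ‖(2 * ⟪e, y⟫_𝕜) • e - y‖ = ‖y‖ := by
  have h : ‖(2 * ⟪e, y⟫_𝕜) • e - y‖ ^ 2 = ‖y‖ ^ 2 := by
    rw [norm_sub_sq (𝕜 := 𝕜), norm_smul, inner_smul_left, he, mul_one, map_mul (starRingEnd 𝕜),
      mul_assoc, RCLike.conj_mul]
    simp only [map_ofNat, norm_mul, RCLike.norm_ofNat]
    norm_cast
    ring
  exact (pow_left_inj₀ (norm_nonneg _) (norm_nonneg _) two_ne_zero).mp h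

theorem two_mul_norm_inner_mul_inner_le {e : E} (he : ‖e‖ = 1) (x y : E) :
    2 * ‖⟪x, e⟫_𝕜 * ⟪e, y⟫_𝕜‖ ≤ ‖x‖ * ‖y‖ + ‖⟪x, y⟫_𝕜‖ := by
  -- Cauchy–Schwarz for `x` against the reflection of `y` in the line through `e`.
  have h : ⟪x, (2 * ⟪e, y⟫_𝕜) • e - y⟫_𝕜 = 2 * (⟪x, e⟫_𝕜 * ⟪e, y⟫_𝕜) - ⟪x, y⟫_𝕜 := by
    rw [inner_sub_right, inner_smul_right]; ring
  calc 2 * ‖⟪x, e⟫_𝕜 * ⟪e, y⟫_𝕜‖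
      = ‖(2 * (⟪x, e⟫_𝕜 * ⟪e, y⟫_𝕜) - ⟪x, y⟫_𝕜) + ⟪x, y⟫_𝕜‖ := by
        rw [sub_add_cancel, norm_mul _ (_ * _), RCLike.norm_ofNat]
    _ ≤ ‖x‖ * ‖y‖ + ‖⟪x, y⟫_𝕜‖ := by
        grw [norm_add_le, ← h, norm_inner_le_norm, norm_two_inner_smul_sub_self he]

end Buzano

theorem Real.sqrt_pow {x : ℝ} (hx : 0 ≤ x) (k : ℕ) : √(x ^ k) = √x ^ k := by
  rw [Real.sqrt_eq_rpow, Real.sqrt_eq_rpow, ← Real.rpow_natCast, ← Real.rpow_natCast,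
    ← Real.rpow_mul hx, ← Real.rpow_mul hx, mul_comm]

theorem pow_succ_le_sum_of_two_mul_le {u s : ℝ} {t p : ℕ → ℝ} (hu : 0 ≤ u) (hus : u ≤ s)
    (ht : ∀ i, 0 ≤ t i) (hp : p 1 = u) (hstep : ∀ m, 2 * u * p m ≤ s * t m + p (m + 1))
    (m : ℕ) :
    u ^ (m + 1) ≤
      ∑ i ∈ Finset.Icc 1 m, 1 / 2 ^ i * t i * s ^ (m + 1 - i) + 1 / 2 ^ m * p (m + 1) := by
  have hs : 0 ≤ s := hu.trans hus
  induction m with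
  | zero => simp [hp]
  | succ m ih =>
    have hsum : (∑ i ∈ Finset.Icc 1 m, 1 / 2 ^ i * t i * s ^ (m + 1 - i)) * u ≤
        ∑ i ∈ Finset.Icc 1 m, 1 / 2 ^ i * t i * s ^ (m + 1 + 1 - i) := by
      rw [Finset.sum_mul]
      refine Finset.sum_le_sum fun i hi ↦ ?_
      rw [show m + 1 + 1 - i = m + 1 - i + 1 by grind, pow_succ, ← mul_assoc]
      have hti := ht i
      gcongr
    calc u ^ (m + 1 + 1)
        = u ^ (m + 1) * u := pow_succ u (m + 1)
      _ ≤ (∑ i ∈ Finset.Icc 1 m, 1 / 2 ^ i * t i * s ^ (m + 1 - i)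
            + 1 / 2 ^ m * p (m + 1)) * u := by
        gcongr
      _ = (∑ i ∈ Finset.Icc 1 m, 1 / 2 ^ i * t i * s ^ (m + 1 - i)) * u
          + 1 / 2 ^ (m + 1) * (2 * u * p (m + 1)) := by ring
      _ ≤ ∑ i ∈ Finset.Icc 1 m, 1 / 2 ^ i * t i * s ^ (m + 1 + 1 - i)
          + 1 / 2 ^ (m + 1) * (s * t (m + 1) + p (m + 1 + 1)) := by
        gcongr
        exact hstep (m + 1)
      _ = _ := by
        rw [Finset.sum_Icc_succ_top (by omega), Nat.add_sub_cancel_left]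
        ring

namespace IsState

variable {A : Type*} [CStarAlgebra A] {φ : A →ₗ[ℂ] ℂ}

attribute [local instance] CStarAlgebra.spectralOrder CStarAlgebra.spectralOrderedRing

noncomputable def toPositiveLinearMap (hφ : IsState φ) : A →ₚ[ℂ] ℂ :=
  .mk₀ φ fun x hx ↦ by
    obtain ⟨b, rfl⟩ := CStarAlgebra.nonneg_iff_eq_star_mul_self.mp hx
    exact hφ.1 b

theorem norm_toPreGNS (hφ : IsState φ) (x : A) :
    ‖hφ.toPositiveLinearMap.toPreGNS x‖ = √(φ (star x * x)).re := rfl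

theorem inner_toPreGNS (hφ : IsState φ) (x y : A) :
    ⟪hφ.toPositiveLinearMap.toPreGNS x, hφ.toPositiveLinearMap.toPreGNS y⟫_ℂ =
      φ (star x * y) :=
  rfl

theorem norm_toPreGNS_one (hφ : IsState φ) : ‖hφ.toPositiveLinearMap.toPreGNS (1 : A)‖ = 1 := by
  simp [norm_toPreGNS, hφ.2]

theorem norm_apply_le (hφ : IsState φ) (a : A) : ‖φ a‖ ≤ √(φ (a * star a)).re := by
  simpa [inner_toPreGNS, norm_toPreGNS, hφ.norm_toPreGNS_one] using
    norm_inner_le_norm (𝕜 := ℂ) (hφ.toPositiveLinearMap.toPreGNS (star a))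
      (hφ.toPositiveLinearMap.toPreGNS 1)

theorem two_mul_norm_mul_norm_pow_le (hφ : IsState φ) (a : A) (m : ℕ) :
    2 * ‖φ a‖ * ‖φ (a ^ m)‖ ≤
      √(φ (a * star a)).re * √(φ (star (a ^ m) * a ^ m)).re + ‖φ (a ^ (m + 1))‖ := by
  simpa [inner_toPreGNS, norm_toPreGNS, pow_succ', mul_assoc] using
    two_mul_norm_inner_mul_inner_le (𝕜 := ℂ) hφ.norm_toPreGNS_one
      (hφ.toPositiveLinearMap.toPreGNS (star a)) (hφ.toPositiveLinearMap.toPreGNS (a ^ m))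

end IsState

theorem abs_state_pow_le_general
    {A : Type*} [CStarAlgebra A] (a : A) (φ : A →ₗ[ℂ] ℂ) (hφ : IsState φ)
    (n : ℕ) :
    ‖φ a‖ ^ n ≤
      (∑ i ∈ Finset.Icc 1 (n - 1),
          (1 / 2 ^ i : ℝ) * Real.sqrt (φ (star (a ^ i) * a ^ i)).re *
            Real.sqrt ((φ (a * star a)).re ^ (n - i)))
        + (1 / 2 ^ (n - 1) : ℝ) * ‖φ (a ^ n)‖ := by
  cases n with
  | zero => simp [hφ.2]
  | succ m =>
    have hr : 0 ≤ (φ (a * star a)).re := by simpa using (Complex.le_def.mp (hφ.1 (star a))).1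
    simp only [Nat.add_sub_cancel, Real.sqrt_pow hr]
    exact pow_succ_le_sum_of_two_mul_le (norm_nonneg _) (hφ.norm_apply_le a)
      (fun _ ↦ Real.sqrt_nonneg _) (by rw [pow_one]) (hφ.two_mul_norm_mul_norm_pow_le a) m

/-- inequality (2.4) in the proof of Theorem 2.6: for a state `φ` and `n ≥ 2`,
`|φ(a)|ⁿ ≤ Σ_{i=1}^{n−1} (1/2ⁱ)·√(φ(|aⁱ|²))·√(φ(|a*|²)^{n−i}) + (1/2^{n−1})·|φ(aⁿ)|`. -/
theorem abs_state_pow_le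
    {A : Type*} [CStarAlgebra A] (a : A) (φ : A →ₗ[ℂ] ℂ) (hφ : IsState φ)
    (n : ℕ) (hn : 2 ≤ n) :
    ‖φ a‖ ^ n ≤
      (∑ i ∈ Finset.Icc 1 (n - 1),
          (1 / 2 ^ i : ℝ) * Real.sqrt (φ (star (a ^ i) * a ^ i)).re *
            Real.sqrt ((φ (a * star a)).re ^ (n - i)))
        + (1 / 2 ^ (n - 1) : ℝ) * ‖φ (a ^ n)‖ :=
  abs_state_pow_le_general a φ hφ n
end

section
/- Let A be a unital C*-algebra and a ∈ A. If v(a) = ‖a‖, then v(a) = r(a), where r(a) is the spectral radius of a. -/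
/-!
Suppose `r(a) < r < ‖a‖`. Then the resolvent is bounded, by `C` say, on the compact annulus
`r ≤ |z| ≤ ‖a‖ + 1`, which lies outside the spectrum. Given a state `φ`, put `λ = φ a` and let
`ξ` be the class of `1` in the GNS space of `φ`, a unit vector with `φ b = ⟪ξ, b ξ⟫`. Then
`‖(λ - a) ξ‖² = ‖a ξ‖² - |λ|² ≤ ‖a‖² - |λ|²`, while `ξ = (λ - a)⁻¹ (λ - a) ξ` gives
`1 ≤ C² ‖(λ - a) ξ‖²` whenever `λ` lies in the annulus. Since `v(a) = ‖a‖`, there are states with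
`|λ|` arbitrarily close to `‖a‖`, which makes these two bounds incompatible.
-/

open scoped ComplexOrder NNReal ENNReal InnerProductSpace
open Filter Topology

lemma norm_sub_inner_smul_sq {𝕜 E : Type*} [RCLike 𝕜] [SeminormedAddCommGroup E]
    [InnerProductSpace 𝕜 E] {ξ : E} (hξ : ‖ξ‖ = 1) (η : E) :
    ‖η - ⟪ξ, η⟫_𝕜 • ξ‖ ^ 2 = ‖η‖ ^ 2 - ‖⟪ξ, η⟫_𝕜‖ ^ 2 := by
  rw [@norm_sub_sq 𝕜, inner_smul_right, ← inner_conj_symm, RCLike.conj_mul, norm_smul,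
    RCLike.norm_conj, hξ, mul_one]
  norm_cast
  ring

namespace spectrum

variable {𝕜 A : Type*} [NontriviallyNormedField 𝕜] [ProperSpace 𝕜] [NormedRing A]
  [NormedAlgebra 𝕜 A] [CompleteSpace A]

lemma exists_norm_resolvent_le_of_spectralRadius_lt {a : A} {r : ℝ≥0}
    (hr : spectralRadius 𝕜 a < r) (R : ℝ) :
    ∃ C, ∀ z : 𝕜, r ≤ ‖z‖ → ‖z‖ ≤ R → ‖resolvent a z‖ ≤ C := by
  set K := Metric.closedBall (0 : 𝕜) R \ Metric.ball 0 r
  have hK : IsCompact K := (isCompact_closedBall 0 R).diff Metric.isOpen_ball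
  have hρ : K ⊆ resolventSet 𝕜 a := fun z hz =>
    mem_resolventSet_of_spectralRadius_lt <| hr.trans_le <| by
      simpa [K, ← NNReal.coe_le_coe] using hz.2
  obtain ⟨C, hC⟩ := hK.exists_bound_of_continuousOn fun z hz =>
    (hasDerivAt_resolvent_const_left (hρ hz)).continuousAt.continuousWithinAt
  exact ⟨C, fun z hrz hzR => hC z ⟨by simpa using hzR, by simpa using hrz⟩⟩

lemma nnnorm_le_spectralRadius_of_mem_closure {a : A} {S : Set 𝕜}
    (hS : ‖a‖ ∈ closure (norm '' S))
    (hgap : ∀ z ∈ S, z ∈ resolventSet 𝕜 a → 1 ≤ ‖resolvent a z‖ ^ 2 * (‖a‖ ^ 2 - ‖z‖ ^ 2)) :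
    (‖a‖₊ : ℝ≥0∞) ≤ spectralRadius 𝕜 a := by
  by_contra! hlt
  obtain ⟨r, hr, hra⟩ := ENNReal.lt_iff_exists_nnreal_btwn.mp hlt
  obtain ⟨C, hC⟩ := exists_norm_resolvent_le_of_spectralRadius_lt hr (‖a‖ + 1)
  have hgap_small : Tendsto (fun t : ℝ => C ^ 2 * (‖a‖ ^ 2 - t ^ 2)) (𝓝 ‖a‖) (𝓝 0) := by
    have hcont : Continuous fun t : ℝ => C ^ 2 * (‖a‖ ^ 2 - t ^ 2) := by fun_prop
    simpa using hcont.tendsto ‖a‖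
  have hnear : ∀ᶠ t in 𝓝 ‖a‖, (r : ℝ) < t ∧ t < ‖a‖ + 1 ∧ C ^ 2 * (‖a‖ ^ 2 - t ^ 2) < 1 :=
    (eventually_gt_nhds (by exact_mod_cast hra)).and <|
      (eventually_lt_nhds (lt_add_one _)).and (hgap_small.eventually (gt_mem_nhds one_pos))
  obtain ⟨_, ⟨hrz, hzR, hCz⟩, z, hz, rfl⟩ := mem_closure_iff_nhds.mp hS _ hnear
  have hres : z ∈ resolventSet 𝕜 a :=
    mem_resolventSet_of_spectralRadius_lt (hr.trans (by exact_mod_cast hrz))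
  have hlow := hgap z hz hres
  have hup := hC z hrz.le hzR.le
  rcases le_total (‖a‖ ^ 2 - ‖z‖ ^ 2) 0 with hneg | hpos
  · nlinarith [sq_nonneg ‖resolvent a z‖]
  · have : ‖resolvent a z‖ ^ 2 ≤ C ^ 2 := pow_le_pow_left₀ (norm_nonneg _) hup 2
    nlinarith

end spectrum

namespace PositiveLinearMap

variable {A : Type*} [CStarAlgebra A] [PartialOrder A] [StarOrderedRing A] {f : A →ₚ[ℂ] ℂ}

lemma norm_toPreGNS_mul_le (f : A →ₚ[ℂ] ℂ) (b c : A) :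
    ‖f.toPreGNS (b * c)‖ ≤ ‖b‖ * ‖f.toPreGNS c‖ :=
  (f.leftMulMapPreGNS b).le_of_opNorm_le
    (LinearMap.mkContinuous_norm_le _ (norm_nonneg b) _) (f.toPreGNS c)

lemma norm_toPreGNS_one (hf : f 1 = 1) : ‖f.toPreGNS 1‖ = 1 := by
  have h := f.preGNS_norm_sq (f.toPreGNS 1)
  simp only [ofPreGNS_toPreGNS, star_one, mul_one, hf] at h
  exact (pow_eq_one_iff_of_nonneg (norm_nonneg _) two_ne_zero).mp (by exact_mod_cast h)

lemma norm_toPreGNS_le (hf : f 1 = 1) (b : A) : ‖f.toPreGNS b‖ ≤ ‖b‖ := by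
  simpa [norm_toPreGNS_one hf] using f.norm_toPreGNS_mul_le b 1

lemma inner_toPreGNS_one_left (b : A) : ⟪f.toPreGNS 1, f.toPreGNS b⟫_ℂ = f b := by
  simp [preGNS_inner_def]

lemma norm_apply_le_of_map_one (hf : f 1 = 1) (b : A) : ‖f b‖ ≤ ‖b‖ := by
  rw [← inner_toPreGNS_one_left]
  calc _ ≤ ‖f.toPreGNS 1‖ * ‖f.toPreGNS b‖ := norm_inner_le_norm _ _
    _ ≤ ‖b‖ := by rw [norm_toPreGNS_one hf, one_mul]; exact norm_toPreGNS_le hf b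

lemma norm_toPreGNS_algebraMap_sub_sq_le (hf : f 1 = 1) (a : A) :
    ‖f.toPreGNS (algebraMap ℂ A (f a) - a)‖ ^ 2 ≤ ‖a‖ ^ 2 - ‖f a‖ ^ 2 := by
  have h : f.toPreGNS (algebraMap ℂ A (f a) - a) =
      -(f.toPreGNS a - ⟪f.toPreGNS 1, f.toPreGNS a⟫_ℂ • f.toPreGNS 1) := by
    rw [inner_toPreGNS_one_left, Algebra.algebraMap_eq_smul_one, map_sub, map_smul]
    abel
  rw [h, norm_neg, norm_sub_inner_smul_sq (norm_toPreGNS_one hf), inner_toPreGNS_one_left]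
  gcongr
  exact norm_toPreGNS_le hf a

lemma one_le_norm_resolvent_sq_mul (hf : f 1 = 1) {a : A} (ha : f a ∈ resolventSet ℂ a) :
    1 ≤ ‖resolvent a (f a)‖ ^ 2 * (‖a‖ ^ 2 - ‖f a‖ ^ 2) := by
  have hinv : resolvent a (f a) * (algebraMap ℂ A (f a) - a) = 1 := Ring.inverse_mul_cancel _ ha
  have h1 : 1 ≤ ‖resolvent a (f a)‖ * ‖f.toPreGNS (algebraMap ℂ A (f a) - a)‖ := by
    simpa [hinv, norm_toPreGNS_one hf] using
      f.norm_toPreGNS_mul_le (resolvent a (f a)) (algebraMap ℂ A (f a) - a)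
  calc 1 ≤ (‖resolvent a (f a)‖ * ‖f.toPreGNS (algebraMap ℂ A (f a) - a)‖) ^ 2 :=
        one_le_pow₀ h1
    _ ≤ _ := by
      rw [mul_pow]
      gcongr
      exact norm_toPreGNS_algebraMap_sub_sq_le hf a

end PositiveLinearMap

section States

variable {A : Type*} [CStarAlgebra A]

lemma IsState.apply_nonneg [PartialOrder A] [StarOrderedRing A] {φ : A →ₗ[ℂ] ℂ}
    (hφ : IsState φ) {x : A} (hx : 0 ≤ x) : 0 ≤ φ x := by
  refine AddSubmonoid.closure_induction ?_ ?_ ?_ (StarOrderedRing.nonneg_iff.mp hx)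
  · rintro _ ⟨b, rfl⟩
    exact hφ.1 b
  · simp
  · intro y z _ _ hy hz
    rw [map_add]
    exact add_nonneg hy hz

noncomputable def IsState.toPositiveLinearMap_s10 [PartialOrder A] [StarOrderedRing A]
    {φ : A →ₗ[ℂ] ℂ} (hφ : IsState φ) : A →ₚ[ℂ] ℂ :=
  PositiveLinearMap.mk₀ φ fun _ => hφ.apply_nonneg

def numericalRange (a : A) : Set ℂ :=
  {z | ∃ φ : A →ₗ[ℂ] ℂ, IsState φ ∧ z = φ a}

lemma numRadius_eq_sSup_norm_image (a : A) : numRadius a = sSup (norm '' numericalRange a) := by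
  unfold numRadius
  congr 1
  ext r
  simp [numericalRange, eq_comm]

end States

/-- Corollary 2.9: if `v(a) = ‖a‖`, then the numerical radius of `a`
equals the spectral radius of `a`. -/
theorem numRadius_eq_spectralRadius_of_numRadius_eq_norm
    {A : Type*} [CStarAlgebra A] (a : A) (h : numRadius a = ‖a‖) :
    ENNReal.ofReal (numRadius a) = spectralRadius ℂ a := by
  obtain rfl | ha := eq_or_ne a 0
  · simp [h]
  have : Nontrivial A := ⟨⟨a, 0, ha⟩⟩
  let _ : PartialOrder A := CStarAlgebra.spectralOrder A
  have _ : StarOrderedRing A := CStarAlgebra.spectralOrderedRing A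
  rw [h, ofReal_norm]
  refine le_antisymm ?_ (spectrum.spectralRadius_le_nnnorm a)
  apply spectrum.nnnorm_le_spectralRadius_of_mem_closure (S := numericalRange a)
  · rw [← h, numRadius_eq_sSup_norm_image]
    refine csSup_mem_closure (Set.nonempty_iff_ne_empty.mpr fun hempty => ha ?_) ⟨‖a‖, ?_⟩
    · rw [← norm_eq_zero, ← h, numRadius_eq_sSup_norm_image, hempty, Real.sSup_empty]
    · rintro _ ⟨_, ⟨φ, hφ, rfl⟩, rfl⟩
      exact hφ.toPositiveLinearMap_s10.norm_apply_le_of_map_one hφ.2 a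
  · rintro _ ⟨φ, hφ, rfl⟩
    exact hφ.toPositiveLinearMap_s10.one_le_norm_resolvent_sq_mul hφ.2
end
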